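/- arXiv:1812.04511 — 7 statements merged into one kernel-verified Lean document; each statement's English description precedes it below -/
import Mathlib

section
/- Let V be a finite-dimensional vector space over a field K and let ω : V × V → K be a nondegenerate alternating (skew-symmetric) bilinear form, with Π : V* × V* → K the inverse bilinear form on the dual space (i.e., Π(ω♭(v), ω♭(w)) = ω(v,w), where ω♭ : V → V* is the musical isomorphism induced by ω). Let V₁, V₂ ⊆ V be subspaces that are orthogonal complements of each other with respect to ω (V₂ = {v ∈ V : ω(v, V₁) = 0} and V₁ = {v ∈ V : ω(v, V₂) = 0}). Set W₁ := V₁° and W₂ := V₂°, the annihilators in V*. Then the radicals of the restricted forms Π|_{W₁×W₁} and Π|_{W₂×W₂} both equal W₁ ∩ W₂; in particular these two restricted forms have equal coranks (dimension of the radical). -/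
open Module

/-- The radical of the restriction of a bilinear form `B` on `V'` to a subspace `W`:
`{f ∈ W : B f g = 0 for all g ∈ W}`. -/
def bilinRestrictRadical {K V' : Type*} [Field K] [AddCommGroup V'] [Module K V']
    (B : V' →ₗ[K] V' →ₗ[K] K) (W : Submodule K V') : Submodule K V' where
  carrier := {f | f ∈ W ∧ ∀ g ∈ W, B f g = 0}
  add_mem' := by
    rintro a b ⟨haW, ha⟩ ⟨hbW, hb⟩
    exact ⟨W.add_mem haW hbW, fun g hg => by simp [ha g hg, hb g hg]⟩
  zero_mem' := ⟨W.zero_mem, fun g hg => by simp⟩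
  smul_mem' := by
    rintro c x ⟨hxW, hx⟩
    exact ⟨W.smul_mem c hxW, fun g hg => by simp [hx g hg]⟩

/-! Since `ω : V →ₗ V →ₗ K` is itself the map `ω♭ : V → V*`, the annihilator of `U₁` pulls back
along `ω♭` to the `ω`-orthogonal complement `U₂` of `U₁`.  When `ω♭` is onto, every element of
`V*` is some `ω♭ v`, and `Π(ω♭ v, ω♭ w) = ω(v, w)` turns the radical condition on `U₁°` into
orthogonality of `v` to `U₂`, i.e. `v ∈ U₁`. -/

section

variable {K V : Type*} [Field K] [AddCommGroup V] [Module K V]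

theorem mem_bilinRestrictRadical {V' : Type*} [AddCommGroup V'] [Module K V']
    {B : V' →ₗ[K] V' →ₗ[K] K} {W : Submodule K V'} {f : V'} :
    f ∈ bilinRestrictRadical B W ↔ f ∈ W ∧ ∀ g ∈ W, B f g = 0 :=
  Iff.rfl

theorem LinearMap.SeparatingLeft.surjective_of_finiteDimensional [FiniteDimensional K V]
    {ω : V →ₗ[K] V →ₗ[K] K} (hω : ω.SeparatingLeft) : Function.Surjective ω :=
  (LinearMap.injective_iff_surjective_of_finrank_eq_finrank Subspace.dual_finrank_eq.symm).mp
    (LinearMap.ker_eq_bot.mp (LinearMap.separatingLeft_iff_ker_eq_bot.mp hω))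

theorem apply_mem_dualAnnihilator_iff {ω : V →ₗ[K] V →ₗ[K] K} {U₁ U₂ : Submodule K V}
    (h₂ : ∀ v, v ∈ U₂ ↔ ∀ x ∈ U₁, ω v x = 0) (v : V) :
    ω v ∈ U₁.dualAnnihilator ↔ v ∈ U₂ :=
  (Submodule.mem_dualAnnihilator _).trans (h₂ v).symm

theorem bilinRestrictRadical_dualAnnihilator_eq_inf {ω : V →ₗ[K] V →ₗ[K] K}
    (hω : Function.Surjective ω) {P : Dual K V →ₗ[K] Dual K V →ₗ[K] K}
    (hP : ∀ v w, P (ω v) (ω w) = ω v w) {U₁ U₂ : Submodule K V}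
    (h₂ : ∀ v, v ∈ U₂ ↔ ∀ x ∈ U₁, ω v x = 0) (h₁ : ∀ v, v ∈ U₁ ↔ ∀ x ∈ U₂, ω v x = 0) :
    bilinRestrictRadical P U₁.dualAnnihilator = U₁.dualAnnihilator ⊓ U₂.dualAnnihilator := by
  ext f
  obtain ⟨v, rfl⟩ := hω f
  have hrad : (∀ g ∈ U₁.dualAnnihilator, P (ω v) g = 0) ↔ v ∈ U₁ := by
    rw [hω.forall, h₁ v]
    simp only [apply_mem_dualAnnihilator_iff h₂, hP]
  rw [mem_bilinRestrictRadical, Submodule.mem_inf, hrad, apply_mem_dualAnnihilator_iff h₂,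
    apply_mem_dualAnnihilator_iff h₁]

end

theorem radical_restrict_annihilator_eq_general {K V : Type*} [Field K] [AddCommGroup V] [Module K V]
    [FiniteDimensional K V]
    (ω : V →ₗ[K] V →ₗ[K] K)
    (hnd : ∀ v, (∀ w, ω v w = 0) → v = 0)
    (P : Dual K V →ₗ[K] Dual K V →ₗ[K] K)
    (hP : ∀ v w, P (ω v) (ω w) = ω v w)
    (V₁ V₂ : Submodule K V)
    (hV₂ : ∀ v, v ∈ V₂ ↔ ∀ x ∈ V₁, ω v x = 0)
    (hV₁ : ∀ v, v ∈ V₁ ↔ ∀ x ∈ V₂, ω v x = 0) :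
    bilinRestrictRadical P V₁.dualAnnihilator
        = V₁.dualAnnihilator ⊓ V₂.dualAnnihilator ∧
    bilinRestrictRadical P V₂.dualAnnihilator
        = V₁.dualAnnihilator ⊓ V₂.dualAnnihilator ∧
    finrank K (bilinRestrictRadical P V₁.dualAnnihilator)
        = finrank K (bilinRestrictRadical P V₂.dualAnnihilator) := by
  have hsurj : Function.Surjective ω :=
    LinearMap.SeparatingLeft.surjective_of_finiteDimensional hnd
  have h₁ := bilinRestrictRadical_dualAnnihilator_eq_inf hsurj hP hV₂ hV₁
  have h₂ := bilinRestrictRadical_dualAnnihilator_eq_inf hsurj hP hV₁ hV₂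
  rw [inf_comm] at h₂
  exact ⟨h₁, h₂, by rw [h₁, h₂]⟩

/-- Let `V` be a finite-dimensional vector space over a field `K`,
`ω` a nondegenerate alternating bilinear form on `V`, and `Π` the inverse bilinear form on the
dual space (`Π(ω♭ v, ω♭ w) = ω(v,w)`).  If `V₁, V₂ ⊆ V` are orthogonal complements of each
other with respect to `ω`, and `W₁ = V₁°`, `W₂ = V₂°` are the annihilators in `V*`, then the
radicals of the restrictions `Π|_{W₁×W₁}` and `Π|_{W₂×W₂}` both equal `W₁ ⊓ W₂`; in
particular these restrictions have equal coranks. -/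
theorem radical_restrict_annihilator_eq {K V : Type*} [Field K] [AddCommGroup V] [Module K V]
    [FiniteDimensional K V]
    (ω : V →ₗ[K] V →ₗ[K] K)
    (halt : ∀ v, ω v v = 0)
    (hnd : ∀ v, (∀ w, ω v w = 0) → v = 0)
    (P : Dual K V →ₗ[K] Dual K V →ₗ[K] K)
    (hP : ∀ v w, P (ω v) (ω w) = ω v w)
    (V₁ V₂ : Submodule K V)
    (hV₂ : ∀ v, v ∈ V₂ ↔ ∀ x ∈ V₁, ω v x = 0)
    (hV₁ : ∀ v, v ∈ V₁ ↔ ∀ x ∈ V₂, ω v x = 0) :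
    bilinRestrictRadical P V₁.dualAnnihilator
        = V₁.dualAnnihilator ⊓ V₂.dualAnnihilator ∧
    bilinRestrictRadical P V₂.dualAnnihilator
        = V₁.dualAnnihilator ⊓ V₂.dualAnnihilator ∧
    finrank K (bilinRestrictRadical P V₁.dualAnnihilator)
        = finrank K (bilinRestrictRadical P V₂.dualAnnihilator) :=
  radical_restrict_annihilator_eq_general ω hnd P hP V₁ V₂ hV₂ hV₁
end

section
/- Let 𝔤 be a Lie algebra over a field K which is the internal direct sum of subspaces V₁, …, V_s, let λ₁, …, λ_s ∈ K be pairwise distinct scalars, and let n : 𝔤 → 𝔤 be the linear operator with n(v) = λᵢ·v for v ∈ Vᵢ. If [Vᵢ, Vⱼ] ⊆ Vᵢ + Vⱼ for all i, j ∈ {1,…,s}, then n is an algebraic Nijenhuis operator, i.e., T_n(x,y) = 0 for all x, y ∈ 𝔤. -/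
/-!
The torsion `T_n` is bilinear, so it suffices to check that it vanishes on `V i × V j`. There `n`
acts on `x` and `y` by `λᵢ` and `λⱼ`, and writing `⁅x, y⁆ = a + b` with `a ∈ V i`, `b ∈ V j`,
both `⁅n x, n y⁆` and `n (⁅n x, y⁆ + ⁅x, n y⁆ - n ⁅x, y⁆) = n (λⱼ a + λᵢ b)` equal `λᵢ λⱼ ⁅x, y⁆`.
-/

namespace LinearMap

variable {R M N P : Type*} [CommRing R] [AddCommGroup M] [Module R M] [AddCommGroup N]
  [Module R N] [AddCommGroup P] [Module R P] {ι κ : Type*}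

theorem eq_zero_of_iSup_eq_top {V : ι → Submodule R M} (hV : ⨆ i, V i = ⊤) {f : M →ₗ[R] N}
    (hf : ∀ i, ∀ x ∈ V i, f x = 0) : f = 0 :=
  ker_eq_top.mp <| top_le_iff.mp <| hV ▸ iSup_le fun i x hx => mem_ker.mpr (hf i x hx)

theorem eq_zero_of_iSup_eq_top₂ {V : ι → Submodule R M} {W : κ → Submodule R N}
    (hV : ⨆ i, V i = ⊤) (hW : ⨆ j, W j = ⊤) {B : M →ₗ[R] N →ₗ[R] P}
    (hB : ∀ i j, ∀ x ∈ V i, ∀ y ∈ W j, B x y = 0) : B = 0 :=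
  eq_zero_of_iSup_eq_top hV fun i x hx => eq_zero_of_iSup_eq_top hW fun j y hy => hB i j x hx y hy

end LinearMap

section NijenhuisTorsion

open Module.End

variable {R L : Type*} [CommRing R] [LieRing L] [LieAlgebra R L]

def nijenhuisTorsion (n : L →ₗ[R] L) : L →ₗ[R] L →ₗ[R] L :=
  LinearMap.mk₂ R (fun x y => ⁅n x, n y⁆ - n (⁅n x, y⁆ + ⁅x, n y⁆ - n ⁅x, y⁆))
    (fun _ _ _ => by simp only [map_add, add_lie, map_sub]; abel)
    (fun _ _ _ => by simp only [map_smul, smul_lie, map_add, map_sub, smul_add, smul_sub])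
    (fun _ _ _ => by simp only [map_add, lie_add, map_sub]; abel)
    (fun _ _ _ => by simp only [map_smul, lie_smul, map_add, map_sub, smul_add, smul_sub])

theorem nijenhuisTorsion_apply (n : L →ₗ[R] L) (x y : L) :
    nijenhuisTorsion n x y = ⁅n x, n y⁆ - n (⁅n x, y⁆ + ⁅x, n y⁆ - n ⁅x, y⁆) :=
  rfl

theorem nijenhuisTorsion_eq_zero_of_mem_eigenspace {n : L →ₗ[R] L} {a b : R} {x y : L}
    (hx : x ∈ eigenspace n a) (hy : y ∈ eigenspace n b)
    (hxy : ⁅x, y⁆ ∈ eigenspace n a ⊔ eigenspace n b) : nijenhuisTorsion n x y = 0 := by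
  obtain ⟨u, hu, v, hv, huv⟩ := Submodule.mem_sup.mp hxy
  rw [mem_eigenspace_iff] at hx hy hu hv
  have hn_lie : n ⁅x, y⁆ = a • u + b • v := by rw [← huv, map_add, hu, hv]
  rw [nijenhuisTorsion_apply, hx, hy, hn_lie, lie_smul, smul_lie, lie_smul, ← huv]
  simp only [map_add, map_sub, map_smul, hu, hv]
  module

end NijenhuisTorsion

theorem eignespace_decomposition_isAlgebraicNijenhuis_general {K : Type*} [Field K] {L : Type*}
    [LieRing L] [LieAlgebra K L] {s : ℕ} (V : Fin s → Submodule K L)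
    (hV : DirectSum.IsInternal V) (lam : Fin s → K)
    (n : L →ₗ[K] L) (hn : ∀ i, ∀ v ∈ V i, n v = lam i • v)
    (hbr : ∀ i j, ∀ x ∈ V i, ∀ y ∈ V j, ⁅x, y⁆ ∈ V i ⊔ V j) :
    ∀ x y : L, ⁅n x, n y⁆ - n (⁅n x, y⁆ + ⁅x, n y⁆ - n ⁅x, y⁆) = 0 := by
  have hV_eigen (i : Fin s) : V i ≤ Module.End.eigenspace n (lam i) :=
    fun v hv => Module.End.mem_eigenspace_iff.mpr (hn i v hv)
  have hT : nijenhuisTorsion n = 0 :=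
    LinearMap.eq_zero_of_iSup_eq_top₂ hV.submodule_iSup_eq_top hV.submodule_iSup_eq_top
      fun i j x hx y hy => nijenhuisTorsion_eq_zero_of_mem_eigenspace (hV_eigen i hx)
        (hV_eigen j hy) (sup_le_sup (hV_eigen i) (hV_eigen j) (hbr i j x hx y hy))
  exact LinearMap.congr_fun₂ hT

/-- Let `𝔤` be a Lie algebra over a field `K` which is the internal direct
sum of subspaces `V 0, …, V (s-1)`, let `λ 0, …, λ (s-1)` be pairwise distinct scalars and let
`n : 𝔤 → 𝔤` be the linear operator acting on `V i` as `λ i • ·`.  If `⁅V i, V j⁆ ⊆ V i + V j`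
for all `i, j`, then `n` is an algebraic Nijenhuis operator: `T_n(x,y) = 0` for all `x, y`. -/
theorem eignespace_decomposition_isAlgebraicNijenhuis {K : Type*} [Field K] {L : Type*}
    [LieRing L] [LieAlgebra K L] {s : ℕ} (V : Fin s → Submodule K L)
    (hV : DirectSum.IsInternal V) (lam : Fin s → K) (hlam : Function.Injective lam)
    (n : L →ₗ[K] L) (hn : ∀ i, ∀ v ∈ V i, n v = lam i • v)
    (hbr : ∀ i j, ∀ x ∈ V i, ∀ y ∈ V j, ⁅x, y⁆ ∈ V i ⊔ V j) :
    ∀ x y : L, ⁅n x, n y⁆ - n (⁅n x, y⁆ + ⁅x, n y⁆ - n ⁅x, y⁆) = 0 :=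
  eignespace_decomposition_isAlgebraicNijenhuis_general V hV lam n hn hbr
end

section
/- Let n ≥ 2 and write 2n×2n complex matrices in block form with respect to the index decomposition 2n = (n−1) + 1 + (n−1) + 1 (blocks numbered 1,2,3,4). Let 𝔨 ⊆ M_{2n}(ℂ) be the set of matrices Y whose only possibly nonzero blocks are Y₁₁ = Ã, Y₁₃ = B̃, Y₂₂ = t, Y₃₁ = C̃, Y₃₃ = −Ãᵀ, Y₄₄ = −t, where Ã, B̃, C̃ ∈ M_{n−1}(ℂ) with B̃ = B̃ᵀ and C̃ = C̃ᵀ, and t ∈ ℂ (so 𝔨 ≅ 𝔰𝔭(n−1,ℂ) ⊕ ℂ). Let A₀ ∈ M_{n−1}(ℂ) be the upper shift matrix ((A₀)_{i,i+1} = 1 for 1 ≤ i ≤ n−2, all other entries 0), let 𝟙 ∈ ℂ^{n−1} be the all-ones column vector, and let E ∈ M_{2n}(ℂ) be the matrix whose only nonzero blocks are E₁₁ = A₀, E₃₃ = A₀ᵀ, E₂₄ = 1 (a 1×1 block), E₁₂ = 𝟙 and E₂₁ = 𝟙ᵀ. Then the only Y ∈ 𝔨 with YE = EY is Y = 0. 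-/
/-!
Comparing blocks in `Y E = E Y` gives `t = -t`, `A A₀ = A₀ A` with `A 𝟙 = t 𝟙`,
`B A₀ᵀ = A₀ B` with `𝟙ᵀ B = 0`, and `C A₀ = A₀ᵀ C` with `C 𝟙 = 0`. So each of `A`, `Bᵀ`, `C`
is a matrix `M` with `M S = P M` and `M 𝟙 = 0`, where `S` is `A₀` or `A₀ᵀ`. Such an `M` kills
every `S ^ k 𝟙 = P ^ k (M 𝟙)`, and `𝟙` is a cyclic vector of both `A₀` and `A₀ᵀ`: the vectors
`S ^ k 𝟙` are indicators of initial (resp. final) segments, and consecutive ones differ by a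
standard basis vector. Hence `M = 0`.
-/

open Matrix

/-- A 4×4 block matrix with blocks of sizes `(n-1, 1, n-1, 1)` (indices grouped as
`((Fin m ⊕ Unit) ⊕ (Fin m ⊕ Unit))`, blocks numbered 1,2,3,4). -/
def blk4 {m : ℕ}
    (B11 : Matrix (Fin m) (Fin m) ℂ) (B12 : Matrix (Fin m) Unit ℂ)
    (B13 : Matrix (Fin m) (Fin m) ℂ) (B14 : Matrix (Fin m) Unit ℂ)
    (B21 : Matrix Unit (Fin m) ℂ) (B22 : Matrix Unit Unit ℂ)
    (B23 : Matrix Unit (Fin m) ℂ) (B24 : Matrix Unit Unit ℂ)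
    (B31 : Matrix (Fin m) (Fin m) ℂ) (B32 : Matrix (Fin m) Unit ℂ)
    (B33 : Matrix (Fin m) (Fin m) ℂ) (B34 : Matrix (Fin m) Unit ℂ)
    (B41 : Matrix Unit (Fin m) ℂ) (B42 : Matrix Unit Unit ℂ)
    (B43 : Matrix Unit (Fin m) ℂ) (B44 : Matrix Unit Unit ℂ) :
    Matrix ((Fin m ⊕ Unit) ⊕ (Fin m ⊕ Unit)) ((Fin m ⊕ Unit) ⊕ (Fin m ⊕ Unit)) ℂ :=
  fromBlocks (fromBlocks B11 B12 B21 B22) (fromBlocks B13 B14 B23 B24)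
    (fromBlocks B31 B32 B41 B42) (fromBlocks B33 B34 B43 B44)

/-- The upper shift matrix `A₀` : `(A₀)_{i,i+1} = 1`, all other entries `0`. -/
def shiftM (m : ℕ) : Matrix (Fin m) (Fin m) ℂ :=
  Matrix.of fun i j => if (i : ℕ) + 1 = (j : ℕ) then 1 else 0

/-- The all-ones column vector `𝟙 ∈ ℂ^m`. -/
def onesCol (m : ℕ) : Matrix (Fin m) Unit ℂ := Matrix.of fun _ _ => 1

/-- A scalar as a 1×1 matrix. -/
def scal (z : ℂ) : Matrix Unit Unit ℂ := Matrix.of fun _ _ => z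

section

variable {R m : Type*} [CommSemiring R] [Fintype m] [DecidableEq m]

theorem Submodule.eq_top_of_forall_single_one_mem {p : Submodule R (m → R)}
    (h : ∀ j, Pi.single j 1 ∈ p) : p = ⊤ := by
  rw [eq_top_iff, ← (Pi.basisFun R m).span_eq, Submodule.span_le]
  rintro _ ⟨j, rfl⟩
  simpa using h j

theorem Matrix.eq_zero_of_mul_eq_mul_of_cyclic_of_mulVec_eq_zero {M S P : Matrix m m R}
    (h : M * S = P * M) {v : m → R}
    (hcyc : Submodule.span R (Set.range fun k : ℕ ↦ (S ^ k) *ᵥ v) = ⊤) (hv : M *ᵥ v = 0) :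
    M = 0 := by
  have hpow (k : ℕ) : M *ᵥ (S ^ k *ᵥ v) = 0 := by
    rw [mulVec_mulVec, (SemiconjBy.pow_right h k).eq, ← mulVec_mulVec, hv, mulVec_zero]
  refine toLin'.injective ?_
  rw [map_zero]
  exact LinearMap.ext_on_range hcyc fun k ↦ by simpa using hpow k

end

theorem shiftM_mulVec {m : ℕ} (w : Fin m → ℂ) (i : Fin m) :
    (shiftM m *ᵥ w) i = if h : (i : ℕ) + 1 < m then w ⟨i + 1, h⟩ else 0 := by
  simp only [mulVec, dotProduct, shiftM, of_apply, ite_mul, one_mul, zero_mul]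
  split_ifs with h
  · have hj (j : Fin m) : (i : ℕ) + 1 = j ↔ (⟨i + 1, h⟩ : Fin m) = j := by simp [Fin.ext_iff]
    simp only [hj, Finset.sum_ite_eq, Finset.mem_univ, if_true]
  · exact Finset.sum_eq_zero fun j _ ↦ if_neg (by omega)

theorem shiftM_transpose_mulVec {m : ℕ} (w : Fin m → ℂ) (i : Fin m) :
    ((shiftM m)ᵀ *ᵥ w) i = if h : 0 < (i : ℕ) then w ⟨i - 1, by omega⟩ else 0 := by
  simp only [mulVec, dotProduct, transpose_apply, shiftM, of_apply, ite_mul, one_mul, zero_mul]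
  split_ifs with h
  · have hj (j : Fin m) : (j : ℕ) + 1 = i ↔ j = ⟨i - 1, by omega⟩ := by simp [Fin.ext_iff]; omega
    simp only [hj, Finset.sum_ite_eq', Finset.mem_univ, if_true]
  · exact Finset.sum_eq_zero fun j _ ↦ if_neg (by omega)

theorem shiftM_pow_mulVec_one (m k : ℕ) :
    shiftM m ^ k *ᵥ 1 = fun i : Fin m ↦ if (i : ℕ) + k < m then (1 : ℂ) else 0 := by
  induction k with
  | zero => ext i; simp [i.isLt]
  | succ k ih =>
    ext i
    rw [pow_succ', ← mulVec_mulVec, ih, shiftM_mulVec]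
    dsimp only
    split_ifs <;> first | rfl | omega

theorem shiftM_transpose_pow_mulVec_one (m k : ℕ) :
    (shiftM m)ᵀ ^ k *ᵥ 1 = fun i : Fin m ↦ if k ≤ (i : ℕ) then (1 : ℂ) else 0 := by
  induction k with
  | zero => ext i; simp
  | succ k ih =>
    ext i
    rw [pow_succ', ← mulVec_mulVec, ih, shiftM_transpose_mulVec]
    dsimp only
    split_ifs <;> first | rfl | omega

theorem span_range_shiftM_pow_mulVec_one (m : ℕ) :
    Submodule.span ℂ (Set.range fun k : ℕ ↦ shiftM m ^ k *ᵥ 1) = ⊤ := by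
  refine Submodule.eq_top_of_forall_single_one_mem fun j ↦ ?_
  have hj : Pi.single j 1 = shiftM m ^ (m - 1 - j) *ᵥ 1 - shiftM m ^ (m - j) *ᵥ 1 := by
    ext i
    simp only [shiftM_pow_mulVec_one, Pi.sub_apply, Pi.single_apply, Fin.ext_iff]
    split_ifs <;> first | omega | norm_num
  rw [hj]
  exact Submodule.sub_mem _ (Submodule.subset_span ⟨_, rfl⟩) (Submodule.subset_span ⟨_, rfl⟩)

theorem span_range_shiftM_transpose_pow_mulVec_one (m : ℕ) :
    Submodule.span ℂ (Set.range fun k : ℕ ↦ (shiftM m)ᵀ ^ k *ᵥ 1) = ⊤ := by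
  refine Submodule.eq_top_of_forall_single_one_mem fun j ↦ ?_
  have hj : Pi.single j 1 = (shiftM m)ᵀ ^ (j : ℕ) *ᵥ 1 - (shiftM m)ᵀ ^ (j + 1 : ℕ) *ᵥ 1 := by
    ext i
    simp only [shiftM_transpose_pow_mulVec_one, Pi.sub_apply, Pi.single_apply, Fin.ext_iff]
    split_ifs <;> first | omega | norm_num
  rw [hj]
  exact Submodule.sub_mem _ (Submodule.subset_span ⟨_, rfl⟩) (Submodule.subset_span ⟨_, rfl⟩)

theorem mulVec_one_eq_zero_of_mul_onesCol_eq_zero {l : Type*} {m : ℕ} {M : Matrix l (Fin m) ℂ}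
    (h : M * onesCol m = 0) : M *ᵥ 1 = 0 := by
  ext i
  simpa [onesCol, mul_apply, mulVec, dotProduct] using congrFun (congrFun h i) ()

theorem eq_zero_of_mul_shiftM_eq_mul {m : ℕ} {M P : Matrix (Fin m) (Fin m) ℂ}
    (h : M * shiftM m = P * M) (hM : M * onesCol m = 0) : M = 0 :=
  eq_zero_of_mul_eq_mul_of_cyclic_of_mulVec_eq_zero h (span_range_shiftM_pow_mulVec_one m)
    (mulVec_one_eq_zero_of_mul_onesCol_eq_zero hM)

theorem eq_zero_of_mul_shiftM_transpose_eq_mul {m : ℕ} {M P : Matrix (Fin m) (Fin m) ℂ}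
    (h : M * (shiftM m)ᵀ = P * M) (hM : M * onesCol m = 0) : M = 0 :=
  eq_zero_of_mul_eq_mul_of_cyclic_of_mulVec_eq_zero h
    (span_range_shiftM_transpose_pow_mulVec_one m) (mulVec_one_eq_zero_of_mul_onesCol_eq_zero hM)

theorem centralizer_in_k_trivial_case_a_general (n : ℕ)
    (A B C : Matrix (Fin (n - 1)) (Fin (n - 1)) ℂ) (t : ℂ)
    (Y : Matrix ((Fin (n-1) ⊕ Unit) ⊕ (Fin (n-1) ⊕ Unit))
          ((Fin (n-1) ⊕ Unit) ⊕ (Fin (n-1) ⊕ Unit)) ℂ)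
    (hY : Y = blk4 A 0 B 0
                0 (scal t) 0 0
                C 0 (-Aᵀ) 0
                0 0 0 (scal (-t)))
    (E : Matrix ((Fin (n-1) ⊕ Unit) ⊕ (Fin (n-1) ⊕ Unit))
          ((Fin (n-1) ⊕ Unit) ⊕ (Fin (n-1) ⊕ Unit)) ℂ)
    (hE : E = blk4 (shiftM (n-1)) (onesCol (n-1)) 0 0
                (onesCol (n-1))ᵀ 0 0 (scal 1)
                0 0 (shiftM (n-1))ᵀ 0
                0 0 0 0)
    (hcomm : Y * E = E * Y) :
    Y = 0 := by
  subst hY hE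
  simp only [blk4, fromBlocks_multiply, fromBlocks_add, fromBlocks_inj, Matrix.mul_zero,
    Matrix.zero_mul, add_zero, zero_add] at hcomm
  obtain ⟨⟨hAS, hAu, -, -⟩, ⟨hBS, -, hBu, ht⟩, ⟨hCS, hCu, -, -⟩, -⟩ := hcomm
  have hscal : scal 0 = 0 := by ext; simp [scal]
  obtain rfl : t = 0 := by
    have htt := congrFun (congrFun ht ()) ()
    simp only [scal, mul_apply, of_apply, Finset.univ_unique, Finset.sum_singleton] at htt
    linear_combination htt / 2
  rw [hscal, Matrix.mul_zero] at hAu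
  obtain rfl := eq_zero_of_mul_shiftM_eq_mul hAS hAu
  obtain rfl := eq_zero_of_mul_shiftM_eq_mul hCS hCu
  obtain rfl : B = 0 := by
    refine transpose_eq_zero.1 (eq_zero_of_mul_shiftM_transpose_eq_mul
      (P := shiftM (n - 1)) ?_ ?_)
    · rw [← transpose_mul, ← hBS, transpose_mul, transpose_transpose]
    · simpa using congrArg transpose hBu.symm
  simp [blk4, hscal]

/-- With respect to the block decomposition `2n = (n−1) + 1 + (n−1) + 1`,
let `Y ∈ 𝔨 ≅ 𝔰𝔭(n−1,ℂ) ⊕ ℂ` have blocks `Y₁₁ = Ã`, `Y₁₃ = B̃`, `Y₂₂ = t`, `Y₃₁ = C̃`,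
`Y₃₃ = −Ãᵀ`, `Y₄₄ = −t` with `B̃ = B̃ᵀ`, `C̃ = C̃ᵀ`, and let `E` have blocks `E₁₁ = A₀`
(the upper shift matrix), `E₃₃ = A₀ᵀ`, `E₂₄ = 1`, `E₁₂ = 𝟙`, `E₂₁ = 𝟙ᵀ`.  If `Y` commutes
with `E` then `Y = 0`. -/
theorem centralizer_in_k_trivial_case_a (n : ℕ) (hn : 2 ≤ n)
    (A B C : Matrix (Fin (n - 1)) (Fin (n - 1)) ℂ) (t : ℂ)
    (hB : B = Bᵀ) (hC : C = Cᵀ)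
    (Y : Matrix ((Fin (n-1) ⊕ Unit) ⊕ (Fin (n-1) ⊕ Unit))
          ((Fin (n-1) ⊕ Unit) ⊕ (Fin (n-1) ⊕ Unit)) ℂ)
    (hY : Y = blk4 A 0 B 0
                0 (scal t) 0 0
                C 0 (-Aᵀ) 0
                0 0 0 (scal (-t)))
    (E : Matrix ((Fin (n-1) ⊕ Unit) ⊕ (Fin (n-1) ⊕ Unit))
          ((Fin (n-1) ⊕ Unit) ⊕ (Fin (n-1) ⊕ Unit)) ℂ)
    (hE : E = blk4 (shiftM (n-1)) (onesCol (n-1)) 0 0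
                (onesCol (n-1))ᵀ 0 0 (scal 1)
                0 0 (shiftM (n-1))ᵀ 0
                0 0 0 0)
    (hcomm : Y * E = E * Y) :
    Y = 0 :=
  centralizer_in_k_trivial_case_a_general n A B C t Y hY E hE hcomm
end

section
/- Let n ≥ 1. Let J ∈ M_{n+1}(ℂ) be the tridiagonal skew-symmetric matrix with J_{i,i+1} = 1 and J_{i+1,i} = −1 for 1 ≤ i ≤ n, and all other entries 0, and let E ∈ M_{2n+2}(ℂ) be the block matrix with blocks E = [[0, J],[J, 0]] (with respect to the decomposition 2n+2 = (n+1)+(n+1)). For A ∈ M_n(ℂ), let W_A ∈ M_{n+1}(ℂ) be the block-diagonal matrix with blocks [[0, 0],[0, A]] (with respect to (n+1) = 1+n), and let Y_A ∈ M_{2n+2}(ℂ) be the block-diagonal matrix with blocks [[W_A, 0],[0, −W_Aᵀ]]. Then Y_A E = E Y_A implies A = 0. -/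
/-!
The column `[1; 1]` intertwines `J` and `E`: `E [1; 1] = [1; 1] J`. Hence `M := Y [1; 1]`,
which is `[W; -Wᵀ]`, satisfies `M J = E M`. Since `J` is an unreduced Hessenberg matrix, `e₀` is
a cyclic vector for it, so any `M` with `M J = N M` is determined by its first column. That column
vanishes because the first row and column of `W` vanish, so `M = 0`, hence `W = 0`.
-/

open Matrix

/-- The tridiagonal skew-symmetric matrix `J ∈ M_{n+1}(ℂ)` with `J_{i,i+1} = 1`,
`J_{i+1,i} = −1` and all other entries `0`. -/
def Jmat (n : ℕ) : Matrix (Fin (n + 1)) (Fin (n + 1)) ℂ :=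
  Matrix.of fun i j =>
    if (i : ℕ) + 1 = (j : ℕ) then 1 else if (j : ℕ) + 1 = (i : ℕ) then -1 else 0

/-- For `A ∈ M_n(ℂ)`, the block-diagonal matrix `W_A = [[0,0],[0,A]] ∈ M_{n+1}(ℂ)`
(with respect to `n+1 = 1+n`). -/
def WA {n : ℕ} (A : Matrix (Fin n) (Fin n) ℂ) : Matrix (Fin (n + 1)) (Fin (n + 1)) ℂ :=
  Matrix.of fun i j =>
    Fin.cases (motive := fun _ => ℂ) 0
      (fun i' => Fin.cases (motive := fun _ => ℂ) 0 (fun j' => A i' j') j) i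

structure Matrix.IsUnreducedHessenberg {R : Type*} [Zero R] {n : ℕ}
    (H : Matrix (Fin (n + 1)) (Fin (n + 1)) R) : Prop where
  apply_eq_zero_of_lt : ∀ l k : Fin (n + 1), (k : ℕ) + 1 < l → H l k = 0
  subdiag_ne_zero : ∀ k : Fin n, H k.succ k.castSucc ≠ 0

namespace Matrix.IsUnreducedHessenberg

variable {R ι : Type*} [Semiring R] {n : ℕ} {H : Matrix (Fin (n + 1)) (Fin (n + 1)) R}

theorem mul_apply_castSucc (hH : H.IsUnreducedHessenberg) {M : Matrix ι (Fin (n + 1)) R}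
    {k : Fin n} (hM : ∀ l ≤ k.castSucc, ∀ i, M i l = 0) (i : ι) :
    (M * H) i k.castSucc = M i k.succ * H k.succ k.castSucc := by
  rw [mul_apply, Finset.sum_eq_single k.succ]
  · intro l _ hl
    rcases le_or_gt l k.castSucc with hle | hgt
    · rw [hM l hle, zero_mul]
    · rw [hH.apply_eq_zero_of_lt l _ ?_, mul_zero]
      have : (k : ℕ) + 1 ≠ l := fun h => hl (Fin.ext h.symm)
      simp only [Fin.lt_def, Fin.val_castSucc] at hgt ⊢
      omega
  · simp

theorem eq_zero_of_mul_eq_mul [Fintype ι] [NoZeroDivisors R] (hH : H.IsUnreducedHessenberg)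
    {M : Matrix ι (Fin (n + 1)) R} {N : Matrix ι ι R} (hMH : M * H = N * M)
    (hM₀ : ∀ i, M i 0 = 0) : M = 0 := by
  suffices h : ∀ k : Fin (n + 1), ∀ l ≤ k, ∀ i, M i l = 0 from
    ext fun i l => h l l le_rfl i
  refine Fin.induction ?_ (fun k ih => ?_)
  · intro l hl i
    rw [Fin.le_zero_iff.mp hl, hM₀]
  · have hsucc : ∀ i, M i k.succ = 0 := fun i => by
      have h := hH.mul_apply_castSucc ih i
      rw [hMH, mul_apply, Finset.sum_eq_zero fun j _ => by rw [ih _ le_rfl, mul_zero]] at h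
      exact (mul_eq_zero.mp h.symm).resolve_right (hH.subdiag_ne_zero k)
    intro l hl
    rcases hl.lt_or_eq with hlt | rfl
    · exact ih l (Fin.le_castSucc_iff.mpr hlt)
    · exact hsucc

end Matrix.IsUnreducedHessenberg

theorem Jmat_isUnreducedHessenberg (n : ℕ) : (Jmat n).IsUnreducedHessenberg where
  apply_eq_zero_of_lt l k h := by
    simp only [Jmat, of_apply]
    rw [if_neg (by omega), if_neg (by omega)]
  subdiag_ne_zero k := by
    simp only [Jmat, of_apply, Fin.val_succ, Fin.val_castSucc]
    rw [if_neg (by omega)]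
    simp

theorem WA_apply_zero {n : ℕ} (A : Matrix (Fin n) (Fin n) ℂ) (i : Fin (n + 1)) :
    WA A i 0 = 0 := by
  cases i using Fin.cases <;> simp [WA]

theorem WA_zero_apply {n : ℕ} (A : Matrix (Fin n) (Fin n) ℂ) (j : Fin (n + 1)) :
    WA A 0 j = 0 := by
  simp [WA]

theorem WA_succ_succ {n : ℕ} (A : Matrix (Fin n) (Fin n) ℂ) (i j : Fin n) :
    WA A i.succ j.succ = A i j := by
  simp [WA]

theorem centralizer_in_k_trivial_case_b_general (n : ℕ)
    (A : Matrix (Fin n) (Fin n) ℂ)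
    (Y E : Matrix (Fin (n+1) ⊕ Fin (n+1)) (Fin (n+1) ⊕ Fin (n+1)) ℂ)
    (hY : Y = fromBlocks (WA A) 0 0 (-(WA A)ᵀ))
    (hE : E = fromBlocks 0 (Jmat n) (Jmat n) 0)
    (hcomm : Y * E = E * Y) :
    A = 0 := by
  set R : Matrix (Fin (n+1) ⊕ Fin (n+1)) (Fin (n+1)) ℂ := fromRows 1 1
  have hYR : Y * R = fromRows (WA A) (-(WA A)ᵀ) := by
    simp [hY, R, fromBlocks_mul_fromRows]
  have hER : E * R = R * Jmat n := by
    simp [hE, R, fromBlocks_mul_fromRows]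
  have hYR₀ : Y * R = 0 := by
    refine (Jmat_isUnreducedHessenberg n).eq_zero_of_mul_eq_mul (N := E) ?_ ?_
    · rw [Matrix.mul_assoc, ← hER, ← Matrix.mul_assoc, hcomm, Matrix.mul_assoc]
    · rintro (i | i) <;> simp [hYR, WA_apply_zero, WA_zero_apply]
  have hW : WA A = 0 := by
    have h := hYR.symm.trans hYR₀
    rw [← fromRows_zero, fromRows_inj.eq_iff] at h
    exact h.1
  ext i j
  simpa [WA_succ_succ] using congrFun (congrFun hW i.succ) j.succ

/-- Let `E = [[0,J],[J,0]] ∈ M_{2n+2}(ℂ)` (blocks of size `n+1`) with `J`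
the tridiagonal skew-symmetric matrix, and for `A ∈ M_n(ℂ)` let
`Y_A = [[W_A, 0],[0, −W_Aᵀ]]` with `W_A = [[0,0],[0,A]]`.  If `Y_A` commutes with `E`, then
`A = 0`. -/
theorem centralizer_in_k_trivial_case_b (n : ℕ) (hn : 1 ≤ n)
    (A : Matrix (Fin n) (Fin n) ℂ)
    (Y E : Matrix (Fin (n+1) ⊕ Fin (n+1)) (Fin (n+1) ⊕ Fin (n+1)) ℂ)
    (hY : Y = fromBlocks (WA A) 0 0 (-(WA A)ᵀ))
    (hE : E = fromBlocks 0 (Jmat n) (Jmat n) 0)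
    (hcomm : Y * E = E * Y) :
    A = 0 :=
  centralizer_in_k_trivial_case_b_general n A Y E hY hE hcomm
end

section
/- Let n ≥ 2 and write 2n×2n complex matrices in block form with respect to the decomposition 2n = (n−1)+1+(n−1)+1 (blocks numbered 1,2,3,4). Inside 𝔰𝔲(2n) = {X ∈ M_{2n}(ℂ) : X* = −X, tr X = 0}, define: 𝔨^⊥ as the set of matrices X with blocks X₁₁ = Z₁, X₁₂ = v, X₁₃ = Z₂, X₁₄ = u, X₂₁ = −v̄ᵀ, X₂₂ = a, X₂₃ = u₁ᵀ, X₂₄ = z, X₃₁ = Z̄₂, X₃₂ = −ū₁, X₃₃ = −Z̄₁, X₃₄ = v₁, X₄₁ = −ūᵀ, X₄₂ = −z̄, X₄₃ = −v̄₁ᵀ, X₄₄ = a, where Z₁ = −Z̄₁ᵀ, Z₂ = −Z₂ᵀ, v, u, v₁, u₁ ∈ ℂ^{n−1}, z ∈ ℂ, a = −tr Z₁; 𝔨₁ as the subset of such X with Z₁ = 0, Z₂ = 0, a = 0, and v₁ = v̄, u₁ = u (i.e., blocks X₁₂ = v, X₁₄ = u, X₂₃ = uᵀ, X₂₄ = z,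 X₃₂ = −ū, X₃₄ = v̄, X₂₁ = −v̄ᵀ, X₄₁ = −ūᵀ, X₄₂ = −z̄, X₄₃ = −vᵀ); and 𝔨₂ as the subset with u = 0 and z = 0 (blocks X₁₁ = Z₁, X₁₂ = v₁, X₁₃ = Z₂, X₂₁ = −v̄₁ᵀ, X₂₂ = a, X₂₃ = u₁ᵀ, X₃₁ = Z̄₂, X₃₂ = −ū₁, X₃₃ = −Z̄₁, X₄₄ = a, with a = −tr Z₁). Then 𝔨^⊥ is the internal direct sum of 𝔨₁ and 𝔨₂: every X ∈ 𝔨^⊥ is uniquely the sum of an element of 𝔨₁ and an element of 𝔨₂. -/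
open Matrix

namespace Stmt12

/-- Entrywise complex conjugation of a matrix. -/
def mconj {α β : Type*} (M : Matrix α β ℂ) : Matrix α β ℂ := M.map (starRingEnd ℂ)

/-- Entrywise complex conjugation of a vector. -/
def conjV {m : ℕ} (v : Fin m → ℂ) : Fin m → ℂ := fun i => starRingEnd ℂ (v i)

/-- A vector as a column matrix. -/
def colV {m : ℕ} (v : Fin m → ℂ) : Matrix (Fin m) Unit ℂ := Matrix.of fun i _ => v i

/-- A vector as a row matrix. -/
def rowV {m : ℕ} (v : Fin m → ℂ) : Matrix Unit (Fin m) ℂ := Matrix.of fun _ j => v j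

/-- A scalar as a 1×1 matrix. -/
def scal (z : ℂ) : Matrix Unit Unit ℂ := Matrix.of fun _ _ => z

/-- A 4×4 block matrix with blocks of sizes `(n-1, 1, n-1, 1)`. -/
def blk4 {m : ℕ}
    (B11 : Matrix (Fin m) (Fin m) ℂ) (B12 : Matrix (Fin m) Unit ℂ)
    (B13 : Matrix (Fin m) (Fin m) ℂ) (B14 : Matrix (Fin m) Unit ℂ)
    (B21 : Matrix Unit (Fin m) ℂ) (B22 : Matrix Unit Unit ℂ)
    (B23 : Matrix Unit (Fin m) ℂ) (B24 : Matrix Unit Unit ℂ)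
    (B31 : Matrix (Fin m) (Fin m) ℂ) (B32 : Matrix (Fin m) Unit ℂ)
    (B33 : Matrix (Fin m) (Fin m) ℂ) (B34 : Matrix (Fin m) Unit ℂ)
    (B41 : Matrix Unit (Fin m) ℂ) (B42 : Matrix Unit Unit ℂ)
    (B43 : Matrix Unit (Fin m) ℂ) (B44 : Matrix Unit Unit ℂ) :
    Matrix ((Fin m ⊕ Unit) ⊕ (Fin m ⊕ Unit)) ((Fin m ⊕ Unit) ⊕ (Fin m ⊕ Unit)) ℂ :=
  fromBlocks (fromBlocks B11 B12 B21 B22) (fromBlocks B13 B14 B23 B24)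
    (fromBlocks B31 B32 B41 B42) (fromBlocks B33 B34 B43 B44)

/-- The general matrix shape of elements of `𝔨^⊥ ⊆ 𝔰𝔲(2n)`, with blocks (w.r.t.
`2n = (n−1)+1+(n−1)+1`): `X₁₁ = Z₁`, `X₁₂ = v`, `X₁₃ = Z₂`, `X₁₄ = u`, `X₂₁ = −v̄ᵀ`,
`X₂₂ = a`, `X₂₃ = u₁ᵀ`, `X₂₄ = z`, `X₃₁ = Z̄₂`, `X₃₂ = −ū₁`, `X₃₃ = −Z̄₁`, `X₃₄ = v₁`,
`X₄₁ = −ūᵀ`, `X₄₂ = −z̄`, `X₄₃ = −v̄₁ᵀ`, `X₄₄ = a`. -/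
def kperpM {m : ℕ} (Z₁ Z₂ : Matrix (Fin m) (Fin m) ℂ) (v u v₁ u₁ : Fin m → ℂ) (z a : ℂ) :
    Matrix ((Fin m ⊕ Unit) ⊕ (Fin m ⊕ Unit)) ((Fin m ⊕ Unit) ⊕ (Fin m ⊕ Unit)) ℂ :=
  blk4 Z₁ (colV v) Z₂ (colV u)
    (-rowV (conjV v)) (scal a) (rowV u₁) (scal z)
    (mconj Z₂) (-colV (conjV u₁)) (-(mconj Z₁)) (colV v₁)
    (-rowV (conjV u)) (scal (-(starRingEnd ℂ z))) (-rowV (conjV v₁)) (scal a)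

/-- The subspace `𝔨^⊥`: matrices `kperpM Z₁ Z₂ v u v₁ u₁ z a` with `Z₁` skew-Hermitian,
`Z₂` skew-symmetric and `a = −tr Z₁`. -/
def kperp (m : ℕ) : Set (Matrix ((Fin m ⊕ Unit) ⊕ (Fin m ⊕ Unit))
    ((Fin m ⊕ Unit) ⊕ (Fin m ⊕ Unit)) ℂ) :=
  {X | ∃ (Z₁ Z₂ : Matrix (Fin m) (Fin m) ℂ) (v u v₁ u₁ : Fin m → ℂ) (z a : ℂ),
    Z₁ = -(mconj Z₁)ᵀ ∧ Z₂ = -Z₂ᵀ ∧ a = -Z₁.trace ∧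
    X = kperpM Z₁ Z₂ v u v₁ u₁ z a}

/-- The subspace `𝔨₁ = 𝔤₁ ∩ 𝔨^⊥`: elements of `𝔨^⊥` with
`Z₁ = 0`, `Z₂ = 0`, `a = 0`, `v₁ = v̄` and `u₁ = u`. -/
def k1 (m : ℕ) : Set (Matrix ((Fin m ⊕ Unit) ⊕ (Fin m ⊕ Unit))
    ((Fin m ⊕ Unit) ⊕ (Fin m ⊕ Unit)) ℂ) :=
  {X | ∃ (v u : Fin m → ℂ) (z : ℂ), X = kperpM 0 0 v u (conjV v) u z 0}

/-- The subspace `𝔨₂ = 𝔤₂ ∩ 𝔨^⊥`: elements of `𝔨^⊥` with `u = 0`, `z = 0`, `v₁ = 0`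
(the remaining vector parameters being `v₁` (in the `X₁₂` slot) and `u₁`), `a = −tr Z₁`. -/
def k2 (m : ℕ) : Set (Matrix ((Fin m ⊕ Unit) ⊕ (Fin m ⊕ Unit))
    ((Fin m ⊕ Unit) ⊕ (Fin m ⊕ Unit)) ℂ) :=
  {X | ∃ (Z₁ Z₂ : Matrix (Fin m) (Fin m) ℂ) (v₁ u₁ : Fin m → ℂ) (a : ℂ),
    Z₁ = -(mconj Z₁)ᵀ ∧ Z₂ = -Z₂ᵀ ∧ a = -Z₁.trace ∧
    X = kperpM Z₁ Z₂ v₁ 0 0 u₁ 0 a}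

/-! The `𝔨₂`-part of an element of `𝔨^⊥` vanishes in the blocks `X₁₄ = u`, `X₂₄ = z` and
`X₃₄ = v₁`, while these three parameters determine an element of `𝔨₁`. So the `𝔨₁`-component of
`X` can only be the element of `𝔨₁` read off from those blocks, and the difference lies in `𝔨₂`. -/

local notation "𝕄[" m "]" =>
  Matrix ((Fin m ⊕ Unit) ⊕ (Fin m ⊕ Unit)) ((Fin m ⊕ Unit) ⊕ (Fin m ⊕ Unit)) ℂ

section

variable {m : ℕ}

lemma conjV_conjV (v : Fin m → ℂ) : conjV (conjV v) = v := by
  funext i; simp [conjV]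

lemma kperpM_add (Z₁ Z₂ Z₁' Z₂' : Matrix (Fin m) (Fin m) ℂ)
    (v u v₁ u₁ v' u' v₁' u₁' : Fin m → ℂ) (z a z' a' : ℂ) :
    kperpM Z₁ Z₂ v u v₁ u₁ z a + kperpM Z₁' Z₂' v' u' v₁' u₁' z' a' =
      kperpM (Z₁ + Z₁') (Z₂ + Z₂') (v + v') (u + u') (v₁ + v₁') (u₁ + u₁')
        (z + z') (a + a') := by
  ext i j
  rcases i with (i | i) | (i | i) <;> rcases j with (j | j) | (j | j) <;>
    simp only [kperpM, blk4, Matrix.add_apply, Matrix.fromBlocks, Matrix.of_apply,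
      Sum.elim_inl, Sum.elim_inr, Matrix.neg_apply, mconj, Matrix.map_apply,
      conjV, colV, rowV, scal, Pi.add_apply, map_add] <;> ring

lemma kperpM_eq_add (Z₁ Z₂ : Matrix (Fin m) (Fin m) ℂ) (v u v₁ u₁ : Fin m → ℂ)
    (z a : ℂ) :
    kperpM Z₁ Z₂ v u v₁ u₁ z a =
      kperpM 0 0 (conjV v₁) u v₁ u z 0 + kperpM Z₁ Z₂ (v - conjV v₁) 0 0 (u₁ - u) 0 a := by
  simp only [kperpM_add, zero_add, add_zero, add_sub_cancel]

/-- The element of `𝔨₁` with the same blocks `X₁₄`, `X₂₄`, `X₃₄` as `X`. -/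
def k1Part (X : 𝕄[m]) : 𝕄[m] :=
  let u : Fin m → ℂ := fun i => X (.inl (.inl i)) (.inr (.inr ()))
  let v₁ : Fin m → ℂ := fun i => X (.inr (.inl i)) (.inr (.inr ()))
  kperpM 0 0 (conjV v₁) u v₁ u (X (.inl (.inr ())) (.inr (.inr ()))) 0

lemma k1Part_kperpM (Z₁ Z₂ : Matrix (Fin m) (Fin m) ℂ) (v u v₁ u₁ : Fin m → ℂ)
    (z a : ℂ) :
    k1Part (kperpM Z₁ Z₂ v u v₁ u₁ z a) = kperpM 0 0 (conjV v₁) u v₁ u z 0 := by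
  simp [k1Part, kperpM, blk4, colV, scal]

lemma k1Part_mem_k1 (X : 𝕄[m]) : k1Part X ∈ k1 m :=
  ⟨_, _, _, by rw [k1Part, conjV_conjV]⟩

lemma sub_k1Part_mem_k2 {X : 𝕄[m]} (hX : X ∈ kperp m) : X - k1Part X ∈ k2 m := by
  obtain ⟨Z₁, Z₂, v, u, v₁, u₁, z, a, hZ₁, hZ₂, ha, rfl⟩ := hX
  refine ⟨Z₁, Z₂, v - conjV v₁, u₁ - u, a, hZ₁, hZ₂, ha, ?_⟩
  rw [k1Part_kperpM]
  exact sub_eq_of_eq_add' (kperpM_eq_add Z₁ Z₂ v u v₁ u₁ z a)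

lemma k1Part_add_of_mem {A B : 𝕄[m]} (hA : A ∈ k1 m) (hB : B ∈ k2 m) :
    k1Part (A + B) = A := by
  obtain ⟨v, u, z, rfl⟩ := hA
  obtain ⟨Z₁, Z₂, v₁, u₁, a, -, -, -, rfl⟩ := hB
  rw [kperpM_add, k1Part_kperpM]
  simp only [add_zero, conjV_conjV]

end

theorem kperp_directSum_case_a_general (n : ℕ) :
    ∀ X ∈ kperp (n - 1),
      ∃! p : Matrix ((Fin (n-1) ⊕ Unit) ⊕ (Fin (n-1) ⊕ Unit))
              ((Fin (n-1) ⊕ Unit) ⊕ (Fin (n-1) ⊕ Unit)) ℂ ×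
             Matrix ((Fin (n-1) ⊕ Unit) ⊕ (Fin (n-1) ⊕ Unit))
              ((Fin (n-1) ⊕ Unit) ⊕ (Fin (n-1) ⊕ Unit)) ℂ,
        p.1 ∈ k1 (n - 1) ∧ p.2 ∈ k2 (n - 1) ∧ X = p.1 + p.2 := by
  intro X hX
  refine ⟨(k1Part X, X - k1Part X),
    ⟨k1Part_mem_k1 X, sub_k1Part_mem_k2 hX, (add_sub_cancel _ _).symm⟩, ?_⟩
  rintro ⟨A, B⟩ ⟨hA, hB, rfl⟩
  rw [k1Part_add_of_mem hA hB, add_sub_cancel_left]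

/-- `𝔨^⊥` is the internal direct sum of `𝔨₁` and `𝔨₂`: every `X ∈ 𝔨^⊥`
is uniquely the sum of an element of `𝔨₁` and an element of `𝔨₂`. -/
theorem kperp_directSum_case_a (n : ℕ) (hn : 2 ≤ n) :
    ∀ X ∈ kperp (n - 1),
      ∃! p : Matrix ((Fin (n-1) ⊕ Unit) ⊕ (Fin (n-1) ⊕ Unit))
              ((Fin (n-1) ⊕ Unit) ⊕ (Fin (n-1) ⊕ Unit)) ℂ ×
             Matrix ((Fin (n-1) ⊕ Unit) ⊕ (Fin (n-1) ⊕ Unit))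
              ((Fin (n-1) ⊕ Unit) ⊕ (Fin (n-1) ⊕ Unit)) ℂ,
        p.1 ∈ k1 (n - 1) ∧ p.2 ∈ k2 (n - 1) ∧ X = p.1 + p.2 :=
  kperp_directSum_case_a_general n

end Stmt12
end

section
/- Let n ≥ 1 and write (2n+2)×(2n+2) complex matrices in block form with respect to the decomposition 2n+2 = 1+n+1+n (blocks numbered 1,2,3,4). Define: 𝔨^⊥ as the set of matrices X with blocks X₁₁ = ia, X₁₂ = uᵀ, X₁₄ = v̄ᵀ, X₂₁ = −ū, X₂₃ = −v̄, X₂₄ = Z₁, X₃₂ = vᵀ, X₃₃ = −ia, X₃₄ = ūᵀ, X₄₁ = −v, X₄₂ = Z̄₁, X₄₃ = −u, all other blocks zero, where Z₁ = −Z₁ᵀ ∈ M_n(ℂ), a ∈ ℝ, u, v ∈ ℂⁿ; 𝔨₁ as the subset of such X with a = 0 and v = u (blocks X₁₂ = uᵀ, X₁₄ = ūᵀ, X₂₁ = −ū, X₂₃ = −ū, X₂₄ = Z₁, X₃₂ = uᵀ, X₃₄ = ūᵀ, X₄₁ = −u, X₄₂ = Z̄₁, X₄₃ = −u); and 𝔨₂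 as the subset with Z₁ = 0 and v = 0 (blocks X₁₁ = ia, X₁₂ = u₁ᵀ, X₂₁ = −ū₁, X₃₃ = −ia, X₃₄ = ū₁ᵀ, X₄₃ = −u₁). Then 𝔨^⊥ is the internal direct sum of 𝔨₁ and 𝔨₂: every X ∈ 𝔨^⊥ is uniquely the sum of an element of 𝔨₁ and an element of 𝔨₂. -/
/-!
The parametrisation `(Z₁, a, u, v) ↦ kperpM Z₁ a u v` is additive and injective, so `𝔨^⊥`,
`𝔨₁`, `𝔨₂` correspond to subspaces of parameters, and the claim becomes the unique splitting
`(Z₁, a, u, v) = (Z₁, 0, v, v) + (0, a, u - v, 0)`.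
-/

open Matrix

namespace Stmt13

/-- Entrywise complex conjugation of a matrix. -/
def mconj {α β : Type*} (M : Matrix α β ℂ) : Matrix α β ℂ := M.map (starRingEnd ℂ)

/-- Entrywise complex conjugation of a vector. -/
def conjV {m : ℕ} (v : Fin m → ℂ) : Fin m → ℂ := fun i => starRingEnd ℂ (v i)

/-- A vector as a column matrix. -/
def colV {m : ℕ} (v : Fin m → ℂ) : Matrix (Fin m) Unit ℂ := Matrix.of fun i _ => v i

/-- A vector as a row matrix. -/
def rowV {m : ℕ} (v : Fin m → ℂ) : Matrix Unit (Fin m) ℂ := Matrix.of fun _ j => v j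

/-- A scalar as a 1×1 matrix. -/
def scal (z : ℂ) : Matrix Unit Unit ℂ := Matrix.of fun _ _ => z

/-- A 4×4 block matrix with blocks of sizes `(1, n, 1, n)` (indices grouped as
`((Unit ⊕ Fin n) ⊕ (Unit ⊕ Fin n))`, blocks numbered 1,2,3,4). -/
def blk4 {m : ℕ}
    (B11 : Matrix Unit Unit ℂ) (B12 : Matrix Unit (Fin m) ℂ)
    (B13 : Matrix Unit Unit ℂ) (B14 : Matrix Unit (Fin m) ℂ)
    (B21 : Matrix (Fin m) Unit ℂ) (B22 : Matrix (Fin m) (Fin m) ℂ)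
    (B23 : Matrix (Fin m) Unit ℂ) (B24 : Matrix (Fin m) (Fin m) ℂ)
    (B31 : Matrix Unit Unit ℂ) (B32 : Matrix Unit (Fin m) ℂ)
    (B33 : Matrix Unit Unit ℂ) (B34 : Matrix Unit (Fin m) ℂ)
    (B41 : Matrix (Fin m) Unit ℂ) (B42 : Matrix (Fin m) (Fin m) ℂ)
    (B43 : Matrix (Fin m) Unit ℂ) (B44 : Matrix (Fin m) (Fin m) ℂ) :
    Matrix ((Unit ⊕ Fin m) ⊕ (Unit ⊕ Fin m)) ((Unit ⊕ Fin m) ⊕ (Unit ⊕ Fin m)) ℂ :=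
  fromBlocks (fromBlocks B11 B12 B21 B22) (fromBlocks B13 B14 B23 B24)
    (fromBlocks B31 B32 B41 B42) (fromBlocks B33 B34 B43 B44)

/-- The general matrix shape of elements of `𝔨^⊥ ⊆ 𝔰𝔬(2n+2)`, with blocks (w.r.t.
`2n+2 = 1+n+1+n`): `X₁₁ = ia`, `X₁₂ = uᵀ`, `X₁₄ = v̄ᵀ`, `X₂₁ = −ū`, `X₂₃ = −v̄`,
`X₂₄ = Z₁`, `X₃₂ = vᵀ`, `X₃₃ = −ia`, `X₃₄ = ūᵀ`, `X₄₁ = −v`, `X₄₂ = Z̄₁`, `X₄₃ = −u`,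
all other blocks zero. -/
def kperpM {m : ℕ} (Z₁ : Matrix (Fin m) (Fin m) ℂ) (a : ℝ) (u v : Fin m → ℂ) :
    Matrix ((Unit ⊕ Fin m) ⊕ (Unit ⊕ Fin m)) ((Unit ⊕ Fin m) ⊕ (Unit ⊕ Fin m)) ℂ :=
  blk4 (scal ((a : ℂ) * Complex.I)) (rowV u) 0 (rowV (conjV v))
    (-colV (conjV u)) 0 (-colV (conjV v)) Z₁
    0 (rowV v) (scal (-((a : ℂ) * Complex.I))) (rowV (conjV u))
    (-colV v) (mconj Z₁) (-colV u) 0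

/-- The subspace `𝔨^⊥`: matrices `kperpM Z₁ a u v` with `Z₁` skew-symmetric, `a ∈ ℝ`,
`u, v ∈ ℂⁿ`. -/
def kperp (m : ℕ) : Set (Matrix ((Unit ⊕ Fin m) ⊕ (Unit ⊕ Fin m))
    ((Unit ⊕ Fin m) ⊕ (Unit ⊕ Fin m)) ℂ) :=
  {X | ∃ (Z₁ : Matrix (Fin m) (Fin m) ℂ) (a : ℝ) (u v : Fin m → ℂ),
    Z₁ = -Z₁ᵀ ∧ X = kperpM Z₁ a u v}

/-- The subspace `𝔨₁ = 𝔤₁ ∩ 𝔨^⊥`: elements of `𝔨^⊥` with `a = 0` and `v = u`. -/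
def k1 (m : ℕ) : Set (Matrix ((Unit ⊕ Fin m) ⊕ (Unit ⊕ Fin m))
    ((Unit ⊕ Fin m) ⊕ (Unit ⊕ Fin m)) ℂ) :=
  {X | ∃ (Z₁ : Matrix (Fin m) (Fin m) ℂ) (u : Fin m → ℂ), Z₁ = -Z₁ᵀ ∧ X = kperpM Z₁ 0 u u}

/-- The subspace `𝔨₂ = 𝔤₂ ∩ 𝔨^⊥`: elements of `𝔨^⊥` with `Z₁ = 0` and `v = 0`. -/
def k2 (m : ℕ) : Set (Matrix ((Unit ⊕ Fin m) ⊕ (Unit ⊕ Fin m))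
    ((Unit ⊕ Fin m) ⊕ (Unit ⊕ Fin m)) ℂ) :=
  {X | ∃ (a : ℝ) (u₁ : Fin m → ℂ), X = kperpM 0 a u₁ 0}

lemma conjV_add {m : ℕ} (v w : Fin m → ℂ) : conjV (v + w) = conjV v + conjV w :=
  funext fun _ => map_add _ _ _

lemma mconj_add {α β : Type*} (M N : Matrix α β ℂ) :
    mconj (M + N) = mconj M + mconj N :=
  Matrix.map_add _ (map_add _) M N

lemma rowV_add {m : ℕ} (v w : Fin m → ℂ) : rowV (v + w) = rowV v + rowV w := rfl

lemma colV_add {m : ℕ} (v w : Fin m → ℂ) : colV (v + w) = colV v + colV w := rfl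

lemma scal_add (z w : ℂ) : scal (z + w) = scal z + scal w := rfl

lemma blk4_add {m : ℕ}
    (A11 A13 A31 A33 B11 B13 B31 B33 : Matrix Unit Unit ℂ)
    (A12 A14 A32 A34 B12 B14 B32 B34 : Matrix Unit (Fin m) ℂ)
    (A21 A23 A41 A43 B21 B23 B41 B43 : Matrix (Fin m) Unit ℂ)
    (A22 A24 A42 A44 B22 B24 B42 B44 : Matrix (Fin m) (Fin m) ℂ) :
    blk4 A11 A12 A13 A14 A21 A22 A23 A24 A31 A32 A33 A34 A41 A42 A43 A44 +
        blk4 B11 B12 B13 B14 B21 B22 B23 B24 B31 B32 B33 B34 B41 B42 B43 B44 =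
      blk4 (A11 + B11) (A12 + B12) (A13 + B13) (A14 + B14)
        (A21 + B21) (A22 + B22) (A23 + B23) (A24 + B24)
        (A31 + B31) (A32 + B32) (A33 + B33) (A34 + B34)
        (A41 + B41) (A42 + B42) (A43 + B43) (A44 + B44) := by
  simp only [blk4, fromBlocks_add]

lemma kperpM_add {m : ℕ} (Z Z' : Matrix (Fin m) (Fin m) ℂ) (a a' : ℝ)
    (u v u' v' : Fin m → ℂ) :
    kperpM Z a u v + kperpM Z' a' u' v' = kperpM (Z + Z') (a + a') (u + u') (v + v') := by
  simp only [kperpM, blk4_add, conjV_add, mconj_add, rowV_add, colV_add, ← scal_add,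
    Complex.ofReal_add, add_mul, neg_add, add_zero]

lemma kperpM_inj {m : ℕ} {Z Z' : Matrix (Fin m) (Fin m) ℂ} {a a' : ℝ}
    {u v u' v' : Fin m → ℂ} :
    kperpM Z a u v = kperpM Z' a' u' v' ↔ Z = Z' ∧ a = a' ∧ u = u' ∧ v = v' := by
  refine ⟨fun h => ?_, by rintro ⟨rfl, rfl, rfl, rfl⟩; rfl⟩
  have entry := fun i j => congrFun (congrFun h i) j
  refine ⟨?_, ?_, ?_, ?_⟩
  · ext i j
    simpa [kperpM, blk4] using entry (Sum.inl (Sum.inr i)) (Sum.inr (Sum.inr j))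
  · simpa [kperpM, blk4, scal] using entry (Sum.inl (Sum.inl ())) (Sum.inl (Sum.inl ()))
  · funext j
    simpa [kperpM, blk4, rowV] using entry (Sum.inl (Sum.inl ())) (Sum.inl (Sum.inr j))
  · funext j
    simpa [kperpM, blk4, rowV] using entry (Sum.inr (Sum.inl ())) (Sum.inl (Sum.inr j))

theorem kperp_directSum_case_b_general (n : ℕ) :
    ∀ X ∈ kperp n,
      ∃! p : Matrix ((Unit ⊕ Fin n) ⊕ (Unit ⊕ Fin n)) ((Unit ⊕ Fin n) ⊕ (Unit ⊕ Fin n)) ℂ ×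
             Matrix ((Unit ⊕ Fin n) ⊕ (Unit ⊕ Fin n)) ((Unit ⊕ Fin n) ⊕ (Unit ⊕ Fin n)) ℂ,
        p.1 ∈ k1 n ∧ p.2 ∈ k2 n ∧ X = p.1 + p.2 := by
  rintro X ⟨Z, a, u, v, hZ, rfl⟩
  refine ⟨(kperpM Z 0 v v, kperpM 0 a (u - v) 0), ⟨⟨Z, v, hZ, rfl⟩, ⟨a, u - v, rfl⟩, ?_⟩, ?_⟩
  · rw [kperpM_add, add_zero, zero_add, add_sub_cancel, add_zero]
  · rintro ⟨_, _⟩ ⟨⟨Z', w, -, rfl⟩, ⟨b, u₁, rfl⟩, hsum⟩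
    rw [kperpM_add, kperpM_inj, add_zero, zero_add, add_zero] at hsum
    obtain ⟨rfl, rfl, rfl, rfl⟩ := hsum
    simp

/-- `𝔨^⊥` is the internal direct sum of `𝔨₁` and `𝔨₂`: every `X ∈ 𝔨^⊥`
is uniquely the sum of an element of `𝔨₁` and an element of `𝔨₂`. -/
theorem kperp_directSum_case_b (n : ℕ) (hn : 1 ≤ n) :
    ∀ X ∈ kperp n,
      ∃! p : Matrix ((Unit ⊕ Fin n) ⊕ (Unit ⊕ Fin n)) ((Unit ⊕ Fin n) ⊕ (Unit ⊕ Fin n)) ℂ ×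
             Matrix ((Unit ⊕ Fin n) ⊕ (Unit ⊕ Fin n)) ((Unit ⊕ Fin n) ⊕ (Unit ⊕ Fin n)) ℂ,
        p.1 ∈ k1 n ∧ p.2 ∈ k2 n ∧ X = p.1 + p.2 :=
  kperp_directSum_case_b_general n

end Stmt13
end

section
/- Let n ≥ 1 and write (2n+2)×(2n+2) complex matrices in block form with respect to the decomposition 2n+2 = 1+n+1+n (blocks numbered 1,2,3,4). Consider the subsets of M_{2n+2}(ℂ): 𝔤₁ = the set of matrices with blocks X₁₂ = uᵀ, X₁₄ = ūᵀ, X₂₁ = −ū, X₂₂ = W₁, X₂₃ = −ū, X₂₄ = Z₁, X₃₂ = uᵀ, X₃₄ = ūᵀ, X₄₁ = −u, X₄₂ = Z̄₁, X₄₃ = −u, X₄₄ = W̄₁, all other blocks zero, where W₁, Z₁ ∈ M_n(ℂ), W₁ = −W̄₁ᵀ, Z₁ = −Z₁ᵀ, u ∈ ℂⁿ (a realization of 𝔰𝔬(2n+1)); 𝔤₂ = {[[A, 0],[0, −Aᵀ]] (blocks of size n+1) : A ∈ M_{n+1}(ℂ), A = −Āᵀ} (a realization of 𝔲(n+1)); and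 𝔨 = the set of matrices whose only possibly nonzero blocks are the (2,2)-block W₁ and the (4,4)-block W̄₁, where W₁ ∈ M_n(ℂ), W₁ = −W̄₁ᵀ (a realization of 𝔲(n)). Then 𝔤₁ ∩ 𝔤₂ = 𝔨. -/
open Matrix

namespace Stmt15

/-- Entrywise complex conjugation of a matrix. -/
def mconj {α β : Type*} (M : Matrix α β ℂ) : Matrix α β ℂ := M.map (starRingEnd ℂ)

/-- Entrywise complex conjugation of a vector. -/
def conjV {m : ℕ} (v : Fin m → ℂ) : Fin m → ℂ := fun i => starRingEnd ℂ (v i)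

/-- A vector as a column matrix. -/
def colV {m : ℕ} (v : Fin m → ℂ) : Matrix (Fin m) Unit ℂ := Matrix.of fun i _ => v i

/-- A vector as a row matrix. -/
def rowV {m : ℕ} (v : Fin m → ℂ) : Matrix Unit (Fin m) ℂ := Matrix.of fun _ j => v j

/-- A 4×4 block matrix with blocks of sizes `(1, n, 1, n)`. -/
def blk4 {m : ℕ}
    (B11 : Matrix Unit Unit ℂ) (B12 : Matrix Unit (Fin m) ℂ)
    (B13 : Matrix Unit Unit ℂ) (B14 : Matrix Unit (Fin m) ℂ)
    (B21 : Matrix (Fin m) Unit ℂ) (B22 : Matrix (Fin m) (Fin m) ℂ)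
    (B23 : Matrix (Fin m) Unit ℂ) (B24 : Matrix (Fin m) (Fin m) ℂ)
    (B31 : Matrix Unit Unit ℂ) (B32 : Matrix Unit (Fin m) ℂ)
    (B33 : Matrix Unit Unit ℂ) (B34 : Matrix Unit (Fin m) ℂ)
    (B41 : Matrix (Fin m) Unit ℂ) (B42 : Matrix (Fin m) (Fin m) ℂ)
    (B43 : Matrix (Fin m) Unit ℂ) (B44 : Matrix (Fin m) (Fin m) ℂ) :
    Matrix ((Unit ⊕ Fin m) ⊕ (Unit ⊕ Fin m)) ((Unit ⊕ Fin m) ⊕ (Unit ⊕ Fin m)) ℂ :=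
  fromBlocks (fromBlocks B11 B12 B21 B22) (fromBlocks B13 B14 B23 B24)
    (fromBlocks B31 B32 B41 B42) (fromBlocks B33 B34 B43 B44)

/-- The index type: `2n+2` indices, decomposed as `1 + n + 1 + n`. -/
abbrev Idx (m : ℕ) := (Unit ⊕ Fin m) ⊕ (Unit ⊕ Fin m)

/-- `𝔤₁ ≅ 𝔰𝔬(2n+1)`: matrices with blocks (w.r.t. `2n+2 = 1+n+1+n`) `X₁₂ = uᵀ`,
`X₁₄ = ūᵀ`, `X₂₁ = −ū`, `X₂₂ = W₁`, `X₂₃ = −ū`, `X₂₄ = Z₁`, `X₃₂ = uᵀ`, `X₃₄ = ūᵀ`,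
`X₄₁ = −u`, `X₄₂ = Z̄₁`, `X₄₃ = −u`, `X₄₄ = W̄₁`, all other blocks zero, where `W₁` is
skew-Hermitian, `Z₁` skew-symmetric, `u ∈ ℂⁿ`. -/
def g1 (m : ℕ) : Set (Matrix (Idx m) (Idx m) ℂ) :=
  {X | ∃ (W₁ Z₁ : Matrix (Fin m) (Fin m) ℂ) (u : Fin m → ℂ),
    W₁ = -(mconj W₁)ᵀ ∧ Z₁ = -Z₁ᵀ ∧
    X = blk4 0 (rowV u) 0 (rowV (conjV u))
          (-colV (conjV u)) W₁ (-colV (conjV u)) Z₁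
          0 (rowV u) 0 (rowV (conjV u))
          (-colV u) (mconj Z₁) (-colV u) (mconj W₁)}

/-- `𝔤₂ ≅ 𝔲(n+1)`: matrices `[[A, 0],[0, −Aᵀ]]` (blocks of size `n+1 = 1+n`) with `A`
skew-Hermitian. -/
def g2 (m : ℕ) : Set (Matrix (Idx m) (Idx m) ℂ) :=
  {X | ∃ A : Matrix (Unit ⊕ Fin m) (Unit ⊕ Fin m) ℂ,
    A = -(mconj A)ᵀ ∧ X = fromBlocks A 0 0 (-Aᵀ)}

/-- `𝔨 ≅ 𝔲(n)`: matrices whose only possibly nonzero blocks are `X₂₂ = W₁` and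
`X₄₄ = W̄₁`, with `W₁` skew-Hermitian. -/
def kk (m : ℕ) : Set (Matrix (Idx m) (Idx m) ℂ) :=
  {X | ∃ W₁ : Matrix (Fin m) (Fin m) ℂ,
    W₁ = -(mconj W₁)ᵀ ∧
    X = blk4 0 0 0 0
          0 W₁ 0 0
          0 0 0 0
          0 0 0 (mconj W₁)}

/-! The matrices of `𝔤₂` are block diagonal for `2n+2 = (n+1) + (n+1)`, whereas the
off-diagonal `(n+1)`-block of a matrix of `𝔤₁` carries `ū` and `Z₁`; so on `𝔤₁ ∩ 𝔤₂` both vanish,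
which leaves exactly the matrices of `𝔨`. Conversely a matrix of `𝔨` lies in `𝔤₂` with
`A = diag(0, W₁)`, because skew-Hermitian `W₁` satisfies `W̄₁ = −W₁ᵀ`. -/

@[simp]
lemma mconj_zero {α β : Type*} : mconj (0 : Matrix α β ℂ) = 0 := by
  ext; simp [mconj]

variable {m : ℕ}

@[simp]
lemma conjV_eq_zero_iff {v : Fin m → ℂ} : conjV v = 0 ↔ v = 0 := by
  simp [conjV, funext_iff]

@[simp]
lemma rowV_eq_zero_iff {v : Fin m → ℂ} : rowV v = 0 ↔ v = 0 := by
  simp [rowV, ← Matrix.ext_iff, funext_iff]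

@[simp]
lemma conjV_zero : conjV (0 : Fin m → ℂ) = 0 := by
  simp

@[simp]
lemma rowV_zero : rowV (0 : Fin m → ℂ) = 0 := by
  simp

@[simp]
lemma colV_zero : colV (0 : Fin m → ℂ) = 0 := by
  ext; simp [colV]

lemma mconj_fromBlocks {l n o p : Type*} (A : Matrix n l ℂ) (B : Matrix n o ℂ)
    (C : Matrix p l ℂ) (D : Matrix p o ℂ) :
    mconj (fromBlocks A B C D) = fromBlocks (mconj A) (mconj B) (mconj C) (mconj D) :=
  fromBlocks_map A B C D _

lemma mconj_eq_neg_transpose {ι : Type*} {W : Matrix ι ι ℂ} (hW : W = -(mconj W)ᵀ) :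
    mconj W = -Wᵀ := by
  conv_lhs => rw [hW]
  ext; simp [mconj]

lemma blk4_diag (W V : Matrix (Fin m) (Fin m) ℂ) :
    blk4 0 0 0 0 0 W 0 0 0 0 0 0 0 0 0 V =
      fromBlocks (fromBlocks 0 0 0 W) 0 0 (fromBlocks 0 0 0 V) := by
  simp only [blk4, fromBlocks_zero]

lemma kk_subset_g1 : kk m ⊆ g1 m := by
  rintro X ⟨W₁, hW, rfl⟩
  exact ⟨W₁, 0, 0, hW, by simp, by simp⟩

lemma kk_subset_g2 : kk m ⊆ g2 m := by
  rintro X ⟨W₁, hW, rfl⟩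
  refine ⟨fromBlocks 0 0 0 W₁, ?_, ?_⟩
  · simpa [mconj_fromBlocks, fromBlocks_transpose, fromBlocks_neg] using hW
  · rw [blk4_diag, mconj_eq_neg_transpose hW, fromBlocks_transpose, fromBlocks_neg]
    simp

lemma g1_inter_g2_subset_kk : g1 m ∩ g2 m ⊆ kk m := by
  rintro X ⟨⟨W₁, Z₁, u, hW, -, rfl⟩, ⟨A, -, hX⟩⟩
  have hoff : fromBlocks 0 (rowV (conjV u)) (-colV (conjV u)) Z₁ = 0 :=
    (fromBlocks_inj.mp hX).2.1
  rw [← fromBlocks_zero, fromBlocks_inj] at hoff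
  obtain ⟨-, hu, -, hZ⟩ := hoff
  obtain rfl : u = 0 := by simpa using hu
  subst hZ
  exact ⟨W₁, hW, by simp⟩

theorem g1_inter_g2_eq_k_case_b_general (n : ℕ) :
    g1 n ∩ g2 n = kk n :=
  g1_inter_g2_subset_kk.antisymm (Set.subset_inter kk_subset_g1 kk_subset_g2)

/-- In `M_{2n+2}(ℂ)`, the intersection of the realizations
`𝔤₁ ≅ 𝔰𝔬(2n+1)` and `𝔤₂ ≅ 𝔲(n+1)` equals the realization `𝔨 ≅ 𝔲(n)`. -/
theorem g1_inter_g2_eq_k_case_b (n : ℕ) (hn : 1 ≤ n) :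
    g1 n ∩ g2 n = kk n :=
  g1_inter_g2_eq_k_case_b_general n

end Stmt15
end
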